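/- arXiv:1812.11516 — 4 statements merged into one kernel-verified Lean document; each statement's English description precedes it below -/
import Mathlib

section
/- Let A be an algebra over a field k of characteristic zero with a locally nilpotent derivation d. On A ⊗ k[x], define (a ⊗ f) ≺ (b ⊗ g) = ab ⊗ f·g' and (a ⊗ f) ≻ (b ⊗ g) = ab ⊗ f'·g, where ' denotes d/dx. Define φ : A → A ⊗ k[x] by φ(a) = Σ_{s≥0} d^s(a) ⊗ x^s/s!. Then φ(a·d(b)) = φ(a) ≺ φ(b) for all a, b ∈ A. -/
/-!
Expanding `φ a ≺ φ b` gives `∑ i j, dⁱa · dʲ⁺¹b ⊗ (xⁱ/i!) · (xʲ/j!)`, since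
`(xʲ⁺¹/(j+1)!)' = xʲ/j!`. As `(xⁱ/i!) · (xʲ/j!) = C(i+j, i) · xⁱ⁺ʲ/(i+j)!`, regrouping by
`s = i + j` produces the Leibniz expansion of `dˢ(a · d b)`. If `dⁿa = 0` and `dᵐb = 0`, every
sum involved may be truncated at `n + m`.
-/

open scoped TensorProduct
open Polynomial Finset

theorem Function.iterate_eq_zero_of_le {M : Type*} [Zero M] {f : M → M} (hf : f 0 = 0)
    {a : M} {n m : ℕ} (ha : f^[n] a = 0) (hnm : n ≤ m) : f^[m] a = 0 := by
  obtain ⟨k, rfl⟩ := Nat.exists_eq_add_of_le hnm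
  rw [add_comm, Function.iterate_add_apply, ha, Function.iterate_fixed hf]

theorem Finset.sum_range_diag_flip_of_support {M : Type*} [AddCommMonoid M] {n m : ℕ}
    {G : ℕ → ℕ → M} (hG : ∀ i j, n ≤ i ∨ m ≤ j → G i j = 0) :
    ∑ s ∈ range (n + m), ∑ i ∈ range (s + 1), G i (s - i) =
      ∑ i ∈ range n, ∑ j ∈ range m, G i j := by
  have inner (i : ℕ) : ∑ j ∈ range (n + m - i), G i j = ∑ j ∈ range m, G i j := by
    rcases le_or_gt n i with hi | hi
    · simp only [hG i _ (Or.inl hi), sum_const_zero]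
    · exact eventually_constant_sum (fun j hj => hG i j (Or.inr hj)) (by omega)
  rw [sum_range_diag_flip]
  simp only [inner]
  exact eventually_constant_sum (fun i hi => sum_eq_zero fun j _ => hG i j (Or.inl hi))
    (Nat.le_add_right n m)

section Leibniz

variable {A F : Type*} [NonUnitalNonAssocSemiring A] [FunLike F A A] [AddMonoidHomClass F A A]

theorem iterate_map_mul_eq_sum_antidiagonal (d : F)
    (hd : ∀ a b : A, d (a * b) = d a * b + a * d b) (n : ℕ) (a b : A) :
    (⇑d)^[n] (a * b) =
      ∑ ij ∈ antidiagonal n, n.choose ij.1 • ((⇑d)^[ij.1] a * (⇑d)^[ij.2] b) := by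
  induction n with
  | zero => simp
  | succ n ih =>
    rw [sum_antidiagonal_choose_succ_nsmul (fun i j => (⇑d)^[i] a * (⇑d)^[j] b) n]
    simp only [Function.iterate_succ_apply', ih, map_sum, map_nsmul, hd, smul_add,
      sum_add_distrib]
    rw [add_comm]
    congr 1
    refine sum_congr rfl fun ⟨i, j⟩ hij => ?_
    rw [n.choose_symm_of_eq_add (mem_antidiagonal.1 hij).symm]

theorem iterate_map_mul_eq_sum_range (d : F)
    (hd : ∀ a b : A, d (a * b) = d a * b + a * d b) (n : ℕ) (a b : A) :
    (⇑d)^[n] (a * b) =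
      ∑ i ∈ range (n + 1), n.choose i • ((⇑d)^[i] a * (⇑d)^[n - i] b) := by
  rw [iterate_map_mul_eq_sum_antidiagonal d hd]
  exact Nat.sum_antidiagonal_eq_sum_range_succ
    (fun i j => n.choose i • ((⇑d)^[i] a * (⇑d)^[j] b)) n

theorem iterate_map_mul_eq_zero (d : F)
    (hd : ∀ a b : A, d (a * b) = d a * b + a * d b) {a b : A} {n m : ℕ}
    (ha : (⇑d)^[n] a = 0) (hb : (⇑d)^[m] b = 0) : (⇑d)^[n + m] (a * b) = 0 := by
  rw [iterate_map_mul_eq_sum_range d hd]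
  refine sum_eq_zero fun i _ => ?_
  rcases le_or_gt n i with hi | hi
  · rw [Function.iterate_eq_zero_of_le (map_zero d) ha hi, zero_mul, smul_zero]
  · rw [Function.iterate_eq_zero_of_le (map_zero d) hb (by omega), mul_zero, smul_zero]

end Leibniz

noncomputable def dividedPowX (k : Type*) [Field k] (s : ℕ) : k[X] :=
  (s.factorial : k)⁻¹ • X ^ s

section DividedPowX

variable {k : Type*} [Field k]

theorem derivative_dividedPowX_zero : derivative (dividedPowX k 0) = 0 := by
  simp [dividedPowX]

theorem derivative_dividedPowX_succ [CharZero k] (s : ℕ) :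
    derivative (dividedPowX k (s + 1)) = dividedPowX k s := by
  rw [dividedPowX, dividedPowX, derivative_smul, derivative_X_pow, ← smul_eq_C_mul, smul_smul,
    Nat.factorial_succ, Nat.add_sub_cancel]
  congr 1
  push_cast
  field_simp

theorem dividedPowX_mul_dividedPowX [CharZero k] (i j : ℕ) :
    dividedPowX k i * dividedPowX k j = (i + j).choose i • dividedPowX k (i + j) := by
  rw [dividedPowX, dividedPowX, dividedPowX, smul_mul_smul_comm, ← pow_add,
    ← Nat.cast_smul_eq_nsmul k, smul_smul]
  congr 1
  rw [Nat.choose_symm_add, ← Nat.add_choose_mul_factorial_mul_factorial i j]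
  have : ((i + j).choose j : k) ≠ 0 := Nat.cast_ne_zero.2 (Nat.choose_pos (by omega)).ne'
  push_cast
  field_simp

theorem iterate_map_mul_tmul_dividedPowX [CharZero k] {A F : Type*}
    [NonUnitalNonAssocSemiring A] [Module k A] [FunLike F A A] [AddMonoidHomClass F A A] (d : F)
    (hd : ∀ a b : A, d (a * b) = d a * b + a * d b) (a b : A) (s : ℕ) :
    ((⇑d)^[s] (a * b)) ⊗ₜ[k] dividedPowX k s =
      ∑ i ∈ range (s + 1),
        ((⇑d)^[i] a * (⇑d)^[s - i] b) ⊗ₜ[k] (dividedPowX k i * dividedPowX k (s - i)) := by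
  rw [iterate_map_mul_eq_sum_range d hd, TensorProduct.sum_tmul]
  refine sum_congr rfl fun i hi => ?_
  rw [dividedPowX_mul_dividedPowX, Nat.add_sub_cancel' (Nat.lt_succ_iff.1 (mem_range.1 hi)),
    TensorProduct.smul_tmul]

end DividedPowX

theorem phi_prec_general (k A : Type*) [Field k] [CharZero k]
    [NonUnitalNonAssocRing A] [Module k A]
    (d : A →ₗ[k] A) (hd : ∀ a b : A, d (a * b) = d a * b + a * d b)
    (hln : ∀ a : A, ∃ n : ℕ, (⇑d)^[n] a = 0)
    (prec : A ⊗[k] k[X] →ₗ[k] A ⊗[k] k[X] →ₗ[k] A ⊗[k] k[X])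
    (hprec : ∀ (a b : A) (f g : k[X]),
      prec (a ⊗ₜ f) (b ⊗ₜ g) = (a * b) ⊗ₜ (f * derivative g))
    (φ : A → A ⊗[k] k[X])
    (hφ : ∀ (a : A) (n : ℕ), (⇑d)^[n] a = 0 →
      φ a = ∑ s ∈ Finset.range n,
        ((⇑d)^[s] a) ⊗ₜ[k] ((s.factorial : k)⁻¹ • (X : k[X]) ^ s)) :
    ∀ a b : A, φ (a * d b) = prec (φ a) (φ b) := by
  intro a b
  obtain ⟨n, ha⟩ := hln a
  obtain ⟨m, hb⟩ := hln b
  have hb' : (⇑d)^[m + 1] b = 0 := Function.iterate_eq_zero_of_le (map_zero d) hb m.le_succ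
  have hdb : (⇑d)^[m] (d b) = 0 := by rwa [← Function.iterate_succ_apply]
  set G : ℕ → ℕ → A ⊗[k] k[X] := fun i j =>
    ((⇑d)^[i] a * (⇑d)^[j] (d b)) ⊗ₜ[k] (dividedPowX k i * dividedPowX k j)
  have hG (i j : ℕ) (hij : n ≤ i ∨ m ≤ j) : G i j = 0 := by
    rcases hij with hi | hj
    · simp [G, Function.iterate_eq_zero_of_le (map_zero d) ha hi]
    · simp [G, Function.iterate_eq_zero_of_le (map_zero d) hdb hj]
  rw [hφ _ _ (iterate_map_mul_eq_zero d hd ha hdb), hφ a n ha, hφ b (m + 1) hb']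
  calc _ = ∑ s ∈ range (n + m), ∑ i ∈ range (s + 1), G i (s - i) :=
        sum_congr rfl fun s _ => iterate_map_mul_tmul_dividedPowX d hd a (d b) s
    _ = ∑ i ∈ range n, ∑ j ∈ range m, G i j := sum_range_diag_flip_of_support hG
    _ = _ := by
      simp only [map_sum, LinearMap.sum_apply, hprec, ← dividedPowX.eq_1]
      rw [sum_comm, sum_range_succ']
      simp only [G, derivative_dividedPowX_succ, Function.iterate_succ_apply,
        derivative_dividedPowX_zero, mul_zero, TensorProduct.tmul_zero, sum_const_zero, add_zero]

/-- For a locally nilpotent derivation `d`, the map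
`φ(a) = Σ_s d^s(a) ⊗ x^s/s!` satisfies `φ(a·d(b)) = φ(a) ≺ φ(b)`, where
`(a ⊗ f) ≺ (b ⊗ g) = ab ⊗ f·g'`. -/
theorem phi_prec (k A : Type*) [Field k] [CharZero k]
    [NonUnitalNonAssocRing A] [Module k A] [SMulCommClass k A A]
    [IsScalarTower k A A]
    (d : A →ₗ[k] A) (hd : ∀ a b : A, d (a * b) = d a * b + a * d b)
    (hln : ∀ a : A, ∃ n : ℕ, (⇑d)^[n] a = 0)
    (prec : A ⊗[k] k[X] →ₗ[k] A ⊗[k] k[X] →ₗ[k] A ⊗[k] k[X])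
    (hprec : ∀ (a b : A) (f g : k[X]),
      prec (a ⊗ₜ f) (b ⊗ₜ g) = (a * b) ⊗ₜ (f * derivative g))
    (φ : A → A ⊗[k] k[X])
    (hφ : ∀ (a : A) (n : ℕ), (⇑d)^[n] a = 0 →
      φ a = ∑ s ∈ Finset.range n,
        ((⇑d)^[s] a) ⊗ₜ[k] ((s.factorial : k)⁻¹ • (X : k[X]) ^ s)) :
    ∀ a b : A, φ (a * d b) = prec (φ a) (φ b) :=
  phi_prec_general k A d hd hln prec hprec φ hφ
end

section
/- Let A be an algebra over a field k of characteristic zero with a locally nilpotent derivation d. On A ⊗ k[x] with operations (a ⊗ f) ≺ (b ⊗ g) = ab ⊗ f·g' and (a ⊗ f) ≻ (b ⊗ g) = ab ⊗ f'·g, the map φ(a) = Σ_{s≥0} d^s(a) ⊗ x^s/s! satisfies φ(d(a)·b) = φ(a) ≻ φ(b) for all a, b ∈ A. -/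
open scoped TensorProduct
open Polynomial

/-- Iterated Leibniz rule for a derivation given as a linear map. -/
lemma iter_leibniz_aux {k A : Type*} [Field k]
    [NonUnitalNonAssocRing A] [Module k A]
    (d : A →ₗ[k] A) (hd : ∀ a b : A, d (a * b) = d a * b + a * d b)
    (n : ℕ) (p q : A) :
    (⇑d)^[n] (p * q) =
      ∑ i ∈ Finset.range (n+1), n.choose i • ((⇑d)^[n - i] p * (⇑d)^[i] q) := by
  induction n with
  | zero => simp
  | succ n IH =>
    calc
      (⇑d)^[n + 1] (p * q) =
          d (∑ i ∈ Finset.range (n+1),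
              n.choose i • ((⇑d)^[n - i] p * (⇑d)^[i] q)) := by
        rw [Function.iterate_succ_apply', IH]
      _ = (∑ i ∈ Finset.range (n+1),
            n.choose i • ((⇑d)^[n - i + 1] p * (⇑d)^[i] q)) +
          ∑ i ∈ Finset.range (n+1),
            n.choose i • ((⇑d)^[n - i] p * (⇑d)^[i + 1] q) := by
        simp_rw [map_sum, map_nsmul, hd, Function.iterate_succ_apply',
          smul_add, Finset.sum_add_distrib]
      _ = (∑ i ∈ Finset.range (n+1),
                n.choose i.succ • ((⇑d)^[n - i] p * (⇑d)^[i + 1] q)) +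
              1 • ((⇑d)^[n + 1] p * (⇑d)^[0] q) +
            ∑ i ∈ Finset.range (n+1),
              n.choose i • ((⇑d)^[n - i] p * (⇑d)^[i + 1] q) :=
        ?_
      _ = ((∑ i ∈ Finset.range (n+1),
              n.choose i • ((⇑d)^[n - i] p * (⇑d)^[i + 1] q)) +
              ∑ i ∈ Finset.range (n+1),
                n.choose i.succ • ((⇑d)^[n - i] p * (⇑d)^[i + 1] q)) +
            1 • ((⇑d)^[n + 1] p * (⇑d)^[0] q) := by
        rw [add_comm, add_assoc]
      _ = (∑ i ∈ Finset.range (n+1),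
              (n + 1).choose (i + 1) • ((⇑d)^[n + 1 - (i + 1)] p * (⇑d)^[i + 1] q)) +
            1 • ((⇑d)^[n + 1] p * (⇑d)^[0] q) := by
        simp_rw [Nat.choose_succ_succ, Nat.succ_sub_succ, add_smul,
          Finset.sum_add_distrib]
      _ = ∑ i ∈ Finset.range (n+2),
            (n+1).choose i • ((⇑d)^[n + 1 - i] p * (⇑d)^[i] q) := by
        rw [Finset.sum_range_succ' _ (n+1), Nat.choose_zero_right, tsub_zero]
    congr
    refine (Finset.sum_range_succ' _ _).trans (congr_arg₂ (· + ·) ?_ ?_)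
    · rw [Finset.sum_range_succ, Nat.choose_succ_self, zero_smul, add_zero]
      refine Finset.sum_congr rfl fun i hi => ?_
      rw [Finset.mem_range] at hi
      have h : n - (i + 1) + 1 = n - i := by omega
      rw [h]
    · rw [Nat.choose_zero_right, tsub_zero]

/-- For a locally nilpotent derivation `d`, the map
`φ(a) = Σ_s d^s(a) ⊗ x^s/s!` satisfies `φ(d(a)·b) = φ(a) ≻ φ(b)`, where
`(a ⊗ f) ≻ (b ⊗ g) = ab ⊗ f'·g`. -/
theorem phi_succ (k A : Type*) [Field k] [CharZero k]
    [NonUnitalNonAssocRing A] [Module k A] [SMulCommClass k A A]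
    [IsScalarTower k A A]
    (d : A →ₗ[k] A) (hd : ∀ a b : A, d (a * b) = d a * b + a * d b)
    (hln : ∀ a : A, ∃ n : ℕ, (⇑d)^[n] a = 0)
    (succ : A ⊗[k] k[X] →ₗ[k] A ⊗[k] k[X] →ₗ[k] A ⊗[k] k[X])
    (hsucc : ∀ (a b : A) (f g : k[X]),
      succ (a ⊗ₜ f) (b ⊗ₜ g) = (a * b) ⊗ₜ (derivative f * g))
    (φ : A → A ⊗[k] k[X])
    (hφ : ∀ (a : A) (n : ℕ), (⇑d)^[n] a = 0 →
      φ a = ∑ s ∈ Finset.range n,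
        ((⇑d)^[s] a) ⊗ₜ[k] ((s.factorial : k)⁻¹ • (X : k[X]) ^ s)) :
    ∀ a b : A, φ (d a * b) = succ (φ a) (φ b) := by
  intro a b
  obtain ⟨n, hn⟩ := hln a
  obtain ⟨m, hm⟩ := hln b
  have hz : ∀ (c : A) (p : ℕ), (⇑d)^[p] c = 0 → ∀ s, p ≤ s → (⇑d)^[s] c = 0 := by
    intro c p hp s hs
    rw [← Nat.sub_add_cancel hs, Function.iterate_add_apply, hp]
    exact Function.iterate_fixed (map_zero d) _
  have hn' : (⇑d)^[n] (d a) = 0 := by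
    rw [← Function.iterate_succ_apply]
    exact hz a n hn (n+1) (Nat.le_succ n)
  set N := n + m + 2 with hN
  -- the common term
  set g : ℕ → ℕ → A ⊗[k] k[X] := fun t i =>
    ((i.factorial : k)⁻¹ * (t.factorial : k)⁻¹) •
      (((⇑d)^[i] (d a) * (⇑d)^[t] b) ⊗ₜ[k] ((X : k[X]) ^ (t + i))) with hg
  have hgz₁ : ∀ t i, m ≤ t → g t i = 0 := fun t i ht => by
    simp [hg, hz b m hm t ht]
  have hgz₂ : ∀ t i, n ≤ i → g t i = 0 := fun t i hi => by
    simp [hg, hz (d a) n hn' i hi]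
  have hgz : ∀ t i, N ≤ t + i → g t i = 0 := by
    intro t i h
    rcases le_or_gt m t with ht | ht
    · exact hgz₁ t i ht
    · exact hgz₂ t i (by omega)
  -- scalar identities
  have fac_ne : ∀ j : ℕ, ((j.factorial : k)) ≠ 0 := fun j =>
    Nat.cast_ne_zero.mpr (Nat.factorial_ne_zero j)
  have key1 : ∀ i j : ℕ,
      (((i+j).factorial : k)⁻¹ * (((i+j).choose j : ℕ) : k)) =
        ((i.factorial : k)⁻¹ * (j.factorial : k)⁻¹) := by
    intro i j
    have h := Nat.choose_mul_factorial_mul_factorial (Nat.le_add_left j i)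
    have h2 : (((i+j).choose j : ℕ) : k) * j.factorial * i.factorial
        = (i+j).factorial := by
      exact_mod_cast congrArg (Nat.cast : ℕ → k)
        (by simpa [Nat.add_sub_cancel] using h)
    have hc : (((i+j).choose j : ℕ) : k) ≠ 0 :=
      Nat.cast_ne_zero.mpr (Nat.choose_pos (Nat.le_add_left j i)).ne'
    rw [← h2]
    field_simp
  have key2 : ∀ i : ℕ,
      (((i+1).factorial : k)⁻¹ * (((i:ℕ)+1 : k))) = (i.factorial : k)⁻¹ := by
    intro i
    have h1 : ((i:k)+1) ≠ 0 := Nat.cast_add_one_ne_zero i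
    rw [Nat.factorial_succ]
    push_cast
    field_simp
  -- LHS
  have hvan : (⇑d)^[N] (d a * b) = 0 := by
    rw [iter_leibniz_aux d hd]
    refine Finset.sum_eq_zero fun i hi => ?_
    rw [Finset.mem_range] at hi
    rcases le_or_gt m i with h | h
    · rw [hz b m hm i h, mul_zero, smul_zero]
    · rw [hz (d a) n hn' (N - i) (by omega), zero_mul, smul_zero]
  have hL : φ (d a * b) = ∑ t ∈ Finset.range N, ∑ i ∈ Finset.range N, g t i := by
    rw [hφ _ N hvan]
    have step1 : ∀ r ∈ Finset.range N,
        ((⇑d)^[r] (d a * b)) ⊗ₜ[k] ((r.factorial : k)⁻¹ • (X : k[X]) ^ r) =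
        ∑ i ∈ Finset.range (r + 1), g i (r - i) := by
      intro r _
      rw [iter_leibniz_aux d hd, TensorProduct.sum_tmul]
      refine Finset.sum_congr rfl fun i hi => ?_
      rw [Finset.mem_range, Nat.lt_succ_iff] at hi
      obtain ⟨j, rfl⟩ : ∃ j, r = j + i := ⟨r - i, by omega⟩
      rw [hg]
      simp only [Nat.add_sub_cancel]
      rw [← Nat.cast_smul_eq_nsmul k, TensorProduct.tmul_smul,
        ← TensorProduct.smul_tmul', smul_smul]
      rw [add_comm i j]
      congr 1
      exact key1 j i
    rw [Finset.sum_congr rfl step1, Finset.sum_range_diag_flip N g]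
    refine Finset.sum_congr rfl fun t ht => ?_
    refine Finset.sum_subset (Finset.range_subset_range.mpr (by omega)) ?_
    intro i hi hni
    rw [Finset.mem_range] at hi
    rw [Finset.mem_range, not_lt] at hni
    exact hgz t i (by omega)
  -- RHS
  have hn1 : (⇑d)^[n+1] a = 0 := hz a n hn (n+1) (Nat.le_succ n)
  have hR : succ (φ a) (φ b) = ∑ t ∈ Finset.range N, ∑ i ∈ Finset.range N, g t i := by
    rw [hφ a (n+1) hn1, hφ b m hm, map_sum]
    have step2 : ∀ t ∈ Finset.range m,
        (succ (∑ s ∈ Finset.range (n+1),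
            ((⇑d)^[s] a) ⊗ₜ[k] ((s.factorial : k)⁻¹ • (X : k[X]) ^ s)))
          (((⇑d)^[t] b) ⊗ₜ[k] ((t.factorial : k)⁻¹ • (X : k[X]) ^ t)) =
        ∑ i ∈ Finset.range N, g t i := by
      intro t ht
      rw [Finset.mem_range] at ht
      rw [map_sum, LinearMap.sum_apply, Finset.sum_range_succ' _ n]
      have h0 : succ (((⇑d)^[0] a) ⊗ₜ[k]
            ((Nat.factorial 0 : k)⁻¹ • (X : k[X]) ^ 0))
          (((⇑d)^[t] b) ⊗ₜ[k] ((t.factorial : k)⁻¹ • (X : k[X]) ^ t)) = 0 := by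
        simp [hsucc]
      rw [h0, add_zero]
      refine (Finset.sum_congr rfl fun i hi => ?_).trans
        (Finset.sum_subset (Finset.range_subset_range.mpr (by omega))
          (fun i _ hni => hgz₂ t i (by
            rw [Finset.mem_range, not_lt] at hni; exact hni)))
      rw [Finset.mem_range] at hi
      simp only [TensorProduct.tmul_smul, map_smul, LinearMap.smul_apply,
        hsucc, smul_smul]
      rw [derivative_X_pow]
      simp only [Nat.add_sub_cancel]
      rw [mul_assoc, ← pow_add, ← Polynomial.smul_eq_C_mul,
        TensorProduct.tmul_smul, smul_smul, hg]
      simp only []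
      rw [Function.iterate_succ_apply, add_comm i t]
      congr 1
      have h1 : ((i:k)+1) ≠ 0 := Nat.cast_add_one_ne_zero i
      rw [Nat.factorial_succ]
      push_cast
      rw [mul_inv]
      field_simp
    rw [Finset.sum_congr rfl step2]
    exact Finset.sum_subset (Finset.range_subset_range.mpr (by omega))
      (fun t _ hnt => Finset.sum_eq_zero fun i _ => hgz₁ t i (by
        rw [Finset.mem_range, not_lt] at hnt; exact hnt))
  rw [hL, hR]
end

section
/- Let A be an associative algebra over k and N a Novikov algebra over k. On A ⊗ N, define (a ⊗ u) ≺ (b ⊗ v) = ab ⊗ uv and (a ⊗ u) ≻ (b ⊗ v) = ab ⊗ vu. Then A ⊗ N satisfies the identity (x ≻ y) ≺ z = x ≻ (y ≺ z). -/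
/-!
Both sides are trilinear in `x, y, z`, so it suffices to compare them on pure tensors. There
`(a ⊗ u ≻ b ⊗ v) ≺ c ⊗ w = (ab)c ⊗ (vu)w` and `a ⊗ u ≻ (b ⊗ v ≺ c ⊗ w) = a(bc) ⊗ (vw)u`, which
agree by associativity of `A` and right commutativity `(vu)w = (vw)u` of `N`.
-/

open scoped TensorProduct

namespace TensorProduct

variable {R M N P Q S T X : Type*} [CommSemiring R]
  [AddCommMonoid M] [AddCommMonoid N] [AddCommMonoid P] [AddCommMonoid Q]
  [AddCommMonoid S] [AddCommMonoid T] [AddCommMonoid X]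
  [Module R M] [Module R N] [Module R P] [Module R Q] [Module R S] [Module R T] [Module R X]

theorem trilinear_ext {f g : M ⊗[R] N →ₗ[R] P ⊗[R] Q →ₗ[R] S ⊗[R] T →ₗ[R] X}
    (h : ∀ m n p q s t, f (m ⊗ₜ n) (p ⊗ₜ q) (s ⊗ₜ t) = g (m ⊗ₜ n) (p ⊗ₜ q) (s ⊗ₜ t)) :
    f = g :=
  ext' fun m n => ext' fun p q => ext' fun s t => h m n p q s t

end TensorProduct

theorem tensor_identity_one_general (k A N : Type*) [Field k]
    [NonUnitalRing A] [Module k A]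
    [NonUnitalNonAssocRing N] [Module k N]
    (hN2 : ∀ u v w : N, (u * v) * w = (u * w) * v)
    (prec succ : A ⊗[k] N →ₗ[k] A ⊗[k] N →ₗ[k] A ⊗[k] N)
    (hprec : ∀ (a b : A) (u v : N), prec (a ⊗ₜ u) (b ⊗ₜ v) = (a * b) ⊗ₜ (u * v))
    (hsucc : ∀ (a b : A) (u v : N), succ (a ⊗ₜ u) (b ⊗ₜ v) = (a * b) ⊗ₜ (v * u)) :
    ∀ x y z : A ⊗[k] N, prec (succ x y) z = succ x (prec y z) := by
  -- both sides as trilinear maps: `x ↦ prec ∘ succ x` and `x ↦ y ↦ succ x ∘ prec y`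
  have trilinear_eq : LinearMap.llcomp k _ _ _ prec ∘ₗ succ =
      (LinearMap.llcomp k _ _ _).compl₁₂ succ prec :=
    TensorProduct.trilinear_ext fun a u b v c w => by
      simp only [LinearMap.comp_apply, LinearMap.compl₁₂_apply, LinearMap.llcomp_apply,
        hsucc, hprec, mul_assoc, hN2]
  intro x y z
  exact congr($trilinear_eq x y z)

/-- On `A ⊗ N` (`A` associative, `N` Novikov) with
`(a⊗u) ≺ (b⊗v) = ab ⊗ uv` and `(a⊗u) ≻ (b⊗v) = ab ⊗ vu`, the identity
`(x ≻ y) ≺ z = x ≻ (y ≺ z)` holds. -/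
theorem tensor_identity_one (k A N : Type*) [Field k]
    [NonUnitalRing A] [Module k A] [SMulCommClass k A A] [IsScalarTower k A A]
    [NonUnitalNonAssocRing N] [Module k N] [SMulCommClass k N N]
    [IsScalarTower k N N]
    (hN1 : ∀ u v w : N, (u * v) * w - u * (v * w) = (v * u) * w - v * (u * w))
    (hN2 : ∀ u v w : N, (u * v) * w = (u * w) * v)
    (prec succ : A ⊗[k] N →ₗ[k] A ⊗[k] N →ₗ[k] A ⊗[k] N)
    (hprec : ∀ (a b : A) (u v : N), prec (a ⊗ₜ u) (b ⊗ₜ v) = (a * b) ⊗ₜ (u * v))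
    (hsucc : ∀ (a b : A) (u v : N), succ (a ⊗ₜ u) (b ⊗ₜ v) = (a * b) ⊗ₜ (v * u)) :
    ∀ x y z : A ⊗[k] N, prec (succ x y) z = succ x (prec y z) :=
  tensor_identity_one_general k A N hN2 prec succ hprec hsucc
end

section
/- Let A be an associative algebra over k and N a Novikov algebra over k. On A ⊗ N, define (a ⊗ u) ≺ (b ⊗ v) = ab ⊗ uv and (a ⊗ u) ≻ (b ⊗ v) = ab ⊗ vu. Then A ⊗ N satisfies the identity (x ≺ y) ≺ z - x ≺ (y ≻ z) + (x ≺ y) ≻ z - x ≻ (y ≻ z) = 0. -/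
/-!
Write `x ⋆ y = x ≺ y + x ≻ y`; the identity says `(x ≺ y) ⋆ z = x ⋆ (y ≻ z)`. Both sides are
trilinear, so it suffices to compare them on pure tensors, where they are
`abc ⊗ ((uv)w + w(uv))` and `abc ⊗ (u(wv) + (wv)u)`. Right commutativity turns `(uv)w` into
`(uw)v` and `(wv)u` into `(wu)v`, after which the two agree by left symmetry.
-/

open scoped TensorProduct

namespace TensorProduct

variable {R M₁ N₁ M₂ N₂ M₃ N₃ P : Type*} [CommSemiring R]
  [AddCommMonoid M₁] [Module R M₁] [AddCommMonoid N₁] [Module R N₁]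
  [AddCommMonoid M₂] [Module R M₂] [AddCommMonoid N₂] [Module R N₂]
  [AddCommMonoid M₃] [Module R M₃] [AddCommMonoid N₃] [Module R N₃]
  [AddCommMonoid P] [Module R P]

theorem ext₃' {f g : M₁ ⊗[R] N₁ →ₗ[R] M₂ ⊗[R] N₂ →ₗ[R] M₃ ⊗[R] N₃ →ₗ[R] P}
    (h : ∀ a u b v c w, f (a ⊗ₜ u) (b ⊗ₜ v) (c ⊗ₜ w) = g (a ⊗ₜ u) (b ⊗ₜ v) (c ⊗ₜ w)) :
    f = g :=
  ext' fun a u => ext' fun b v => ext' fun c w => h a u b v c w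

end TensorProduct

theorem mul_mul_add_mul_mul_eq_of_novikov {N : Type*} [NonUnitalNonAssocRing N]
    (hls : ∀ u v w : N, (u * v) * w - u * (v * w) = (v * u) * w - v * (u * w))
    (hrc : ∀ u v w : N, (u * v) * w = (u * w) * v) (u v w : N) :
    (u * v) * w + w * (u * v) = u * (w * v) + (w * v) * u := by
  rw [hrc u v w, hrc w v u]
  simpa [add_comm] using sub_eq_sub_iff_add_eq_add.mp (hls u w v)

theorem tensor_identity_two_general (k A N : Type*) [Field k]
    [NonUnitalRing A] [Module k A]
    [NonUnitalNonAssocRing N] [Module k N]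
    (hN1 : ∀ u v w : N, (u * v) * w - u * (v * w) = (v * u) * w - v * (u * w))
    (hN2 : ∀ u v w : N, (u * v) * w = (u * w) * v)
    (prec succ : A ⊗[k] N →ₗ[k] A ⊗[k] N →ₗ[k] A ⊗[k] N)
    (hprec : ∀ (a b : A) (u v : N), prec (a ⊗ₜ u) (b ⊗ₜ v) = (a * b) ⊗ₜ (u * v))
    (hsucc : ∀ (a b : A) (u v : N), succ (a ⊗ₜ u) (b ⊗ₜ v) = (a * b) ⊗ₜ (v * u)) :
    ∀ x y z : A ⊗[k] N,
      prec (prec x y) z - prec x (succ y z) + succ (prec x y) z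
        - succ x (succ y z) = 0 := by
  set star := prec + succ
  -- both sides as trilinear maps: `(x, y, z) ↦ star (prec x y) z` and `(x, y, z) ↦ star x (succ y z)`
  have h_star_assoc : prec.compr₂ star
      = LinearMap.lcomp k _ succ ∘ₗ LinearMap.llcomp k _ _ _ ∘ₗ star := by
    refine TensorProduct.ext₃' fun a u b v c w => ?_
    simp [star, hprec, hsucc, mul_assoc, ← TensorProduct.tmul_add,
      mul_mul_add_mul_mul_eq_of_novikov hN1 hN2]
  intro x y z
  have h := congr($h_star_assoc x y z)
  simp only [LinearMap.compr₂_apply, LinearMap.coe_comp, Function.comp_apply,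
    LinearMap.llcomp_apply, LinearMap.lcomp_apply, star, LinearMap.add_apply] at h
  linear_combination (norm := abel) h

/-- On `A ⊗ N` (`A` associative, `N` Novikov) with
`(a⊗u) ≺ (b⊗v) = ab ⊗ uv` and `(a⊗u) ≻ (b⊗v) = ab ⊗ vu`, the identity
`(x ≺ y) ≺ z - x ≺ (y ≻ z) + (x ≺ y) ≻ z - x ≻ (y ≻ z) = 0` holds. -/
theorem tensor_identity_two (k A N : Type*) [Field k]
    [NonUnitalRing A] [Module k A] [SMulCommClass k A A] [IsScalarTower k A A]
    [NonUnitalNonAssocRing N] [Module k N] [SMulCommClass k N N]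
    [IsScalarTower k N N]
    (hN1 : ∀ u v w : N, (u * v) * w - u * (v * w) = (v * u) * w - v * (u * w))
    (hN2 : ∀ u v w : N, (u * v) * w = (u * w) * v)
    (prec succ : A ⊗[k] N →ₗ[k] A ⊗[k] N →ₗ[k] A ⊗[k] N)
    (hprec : ∀ (a b : A) (u v : N), prec (a ⊗ₜ u) (b ⊗ₜ v) = (a * b) ⊗ₜ (u * v))
    (hsucc : ∀ (a b : A) (u v : N), succ (a ⊗ₜ u) (b ⊗ₜ v) = (a * b) ⊗ₜ (v * u)) :
    ∀ x y z : A ⊗[k] N,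
      prec (prec x y) z - prec x (succ y z) + succ (prec x y) z
        - succ x (succ y z) = 0 :=
  tensor_identity_two_general k A N hN1 hN2 prec succ hprec hsucc
end
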